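/- arXiv:2509.22406 — 3 statements merged into one kernel-verified Lean document; each statement's English description precedes it below -/
import Mathlib

section
/- For every optimal prefix-free machine U (with K = K_U), there exists a Kurtz random binary sequence that is not strongly Kurtz random. -/
open scoped ENNReal

namespace Paper

/-- Prefix of length `m` of the binary sequence `x`. -/
def pre (x : ℕ → Bool) (m : ℕ) : List Bool := List.ofFn (fun i : Fin m => x i)

/-- The real number `0.x` represented by the binary sequence `x`. -/
noncomputable def binVal (x : ℕ → Bool) : ℝ :=
  ∑' i : ℕ, if x i then (2:ℝ) ^ (-((i:ℤ) + 1)) else 0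

/-- The real number `x_A = ∑_{j∈A} 2^{-(j+1)}`. -/
noncomputable def xA (A : Set ℕ) : ℝ :=
  ∑' j : ℕ, A.indicator (fun j => (2:ℝ) ^ (-((j:ℤ) + 1))) j

/-- A set (of a primcodable type) is computably enumerable. -/
def CE {α : Type} [Primcodable α] (p : Set α) : Prop :=
  Partrec fun a => Part.assert (a ∈ p) fun _ => Part.some ()

/-- A real number is left-computable if some computable increasing sequence of
rationals converges to it. -/
def LeftComputable (x : ℝ) : Prop :=
  ∃ q : ℕ → ℚ, Computable q ∧ StrictMono q ∧
    Filter.Tendsto (fun n => (q n : ℝ)) Filter.atTop (nhds x)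

/-- A sequence of reals converges computably. -/
def ConvergesComputably (a : ℕ → ℝ) : Prop :=
  ∃ L : ℝ, Filter.Tendsto a Filter.atTop (nhds L) ∧
    ∃ g : ℕ → ℕ, Computable g ∧ ∀ m n : ℕ, g n ≤ m → |a m - L| ≤ (2:ℝ) ^ (-(n:ℤ))

/-- `u_f(m)` is the number of `k` with `f k = m`. -/
noncomputable def uf (f : ℕ → ℕ) (m : ℕ) : ℕ := Nat.card {k : ℕ // f k = m}

/-- A real number is reordered computable. -/
def ReorderedComputable (x : ℝ) : Prop :=
  ∃ f : ℕ → ℕ, Computable f ∧ HasSum (fun k => (2:ℝ) ^ (-(f k : ℤ))) x ∧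
    ConvergesComputably (fun N => ∑ m ∈ Finset.range N, (uf f m : ℝ) * (2:ℝ) ^ (-(m:ℤ)))

/-- A prefix-free machine: a computable partial function on binary strings with
prefix-free domain. -/
def PFMachine (M : List Bool →. List Bool) : Prop :=
  Partrec M ∧ ∀ σ τ : List Bool, σ ∈ M.Dom → τ ∈ M.Dom → σ <+: τ → σ = τ

/-- The Kolmogorov complexity of `τ` with respect to the machine `M`. -/
noncomputable def KM (M : List Bool →. List Bool) (τ : List Bool) : ℕ∞ :=
  sInf {n : ℕ∞ | ∃ σ : List Bool, τ ∈ M σ ∧ (σ.length : ℕ∞) = n}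

/-- An optimal prefix-free machine. -/
def OptimalPF (U : List Bool →. List Bool) : Prop :=
  PFMachine U ∧ ∀ M : List Bool →. List Bool, PFMachine M →
    ∃ c : ℕ, ∀ τ : List Bool, KM U τ ≤ KM M τ + (c : ℕ∞)

/-- Strongly Kurtz random with respect to the (optimal) machine `U`. -/
def StronglyKurtzRandom (U : List Bool →. List Bool) (x : ℕ → Bool) : Prop :=
  ¬ ∃ r : ℕ → ℕ, Computable r ∧ ∀ n : ℕ, KM U (pre x (r n)) ≤ ((r n - n : ℕ) : ℕ∞)

/-- A strong Kurtz test: a uniformly c.e. sequence of sets of strings, all strings of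
`S n` having the same length, with `∑_{τ ∈ S n} 2^{-|τ|} ≤ 2^{-n}`. -/
def StrongKurtzTest (S : ℕ → Set (List Bool)) : Prop :=
  CE {p : ℕ × List Bool | p.2 ∈ S p.1} ∧
  (∀ n : ℕ, ∀ σ ∈ S n, ∀ τ ∈ S n, σ.length = τ.length) ∧
  (∀ n : ℕ, ∑' τ : S n, ((2:ℝ≥0∞) ^ (τ : List Bool).length)⁻¹ ≤ ((2:ℝ≥0∞) ^ n)⁻¹)

/-- The test `S` covers the binary sequence `x` if every `S n` contains a prefix of `x`. -/
def Covers (S : ℕ → Set (List Bool)) (x : ℕ → Bool) : Prop :=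
  ∀ n : ℕ, ∃ τ ∈ S n, pre x τ.length = τ

/-- Kurtz random binary sequence. -/
def KurtzRandom (x : ℕ → Bool) : Prop :=
  ∀ S : Set (List Bool), CE S →
    (∀ σ ∈ S, ∀ τ ∈ S, σ <+: τ → σ = τ) →
    (∑' σ : S, ((2:ℝ≥0∞) ^ (σ : List Bool).length)⁻¹ = 1) →
    ∃ σ ∈ S, pre x σ.length = σ

/-- Immune set: infinite with no infinite c.e. subset. -/
def Immune (A : Set ℕ) : Prop :=
  A.Infinite ∧ ∀ W : Set ℕ, CE W → W.Infinite → ¬ W ⊆ A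

def BiImmune (A : Set ℕ) : Prop := Immune A ∧ Immune Aᶜ

def Hyperimmune (A : Set ℕ) : Prop :=
  A.Infinite ∧ ¬ ∃ f : ℕ → ℕ, Computable f ∧ ∀ n : ℕ, Nat.nth (· ∈ A) n ≤ f n

def HHImmune (A : Set ℕ) : Prop :=
  A.Infinite ∧ ¬ ∃ D : ℕ → Set ℕ, CE {p : ℕ × ℕ | p.2 ∈ D p.1} ∧
    (∀ m n : ℕ, m ≠ n → Disjoint (D m) (D n)) ∧ (∀ n : ℕ, (D n).Finite) ∧
    (∀ n : ℕ, (A ∩ D n).Nonempty)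

def StronglyHHImmune (A : Set ℕ) : Prop :=
  A.Infinite ∧ ¬ ∃ D : ℕ → Set ℕ, CE {p : ℕ × ℕ | p.2 ∈ D p.1} ∧
    (∀ m n : ℕ, m ≠ n → Disjoint (D m) (D n)) ∧
    (∀ n : ℕ, (A ∩ D n).Nonempty)

def Cohesive (A : Set ℕ) : Prop :=
  A.Infinite ∧ ¬ ∃ W : Set ℕ, CE W ∧ (A ∩ W).Infinite ∧ (A ∩ Wᶜ).Infinite

/-- The join `A ⊕ B`. -/
def join (A B : Set ℕ) : Set ℕ :=
  {m : ℕ | ∃ n : ℕ, (m = 2 * n ∧ n ∈ A) ∨ (m = 2 * n + 1 ∧ n ∈ B)}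

/-- Strongly left-computable real. -/
def StronglyLC (x : ℝ) : Prop := ∃ A : Set ℕ, CE A ∧ xA A = x

/-- Regular real: a sum of finitely many strongly left-computable reals. -/
def RegularReal (x : ℝ) : Prop :=
  ∃ (n : ℕ) (y : Fin n → ℝ), (∀ i, StronglyLC (y i)) ∧ ∑ i, y i = x

/-- Effective packing dimension with respect to `U`. -/
noncomputable def eDimSup (U : List Bool →. List Bool) (x : ℕ → Bool) : ℝ≥0∞ :=
  Filter.limsup (fun n : ℕ => (KM U (pre x n) : ℝ≥0∞) / (n : ℝ≥0∞)) Filter.atTop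

/-- Effective Hausdorff dimension with respect to `U`. -/
noncomputable def eDimInf (U : List Bool →. List Bool) (x : ℕ → Bool) : ℝ≥0∞ :=
  Filter.liminf (fun n : ℕ => (KM U (pre x n) : ℝ≥0∞) / (n : ℝ≥0∞)) Filter.atTop

-- ## Auxiliary development

/-- weight of a string -/
noncomputable def wt (σ : List Bool) : ℝ≥0∞ := ((2:ℝ≥0∞) ^ σ.length)⁻¹

lemma kraft_fin : ∀ (n : ℕ) (F : Finset (List Bool)),
    (∀ τ ∈ F, τ.length ≤ n) →
    (∀ σ ∈ F, ∀ τ ∈ F, σ <+: τ → σ = τ) →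
    ∑ τ ∈ F, wt τ ≤ 1 := by
  intro n
  induction n with
  | zero =>
    intro F hlen _
    have hsub : F ⊆ {([] : List Bool)} := by
      intro τ hτ
      have := hlen τ hτ
      simp only [Finset.mem_singleton]
      exact List.eq_nil_of_length_eq_zero (Nat.le_zero.1 this)
    calc ∑ τ ∈ F, wt τ ≤ ∑ τ ∈ {([] : List Bool)}, wt τ :=
          Finset.sum_le_sum_of_subset hsub
      _ = 1 := by simp [wt]
  | succ n ih =>
    intro F hlen hpf
    by_cases hnil : ([] : List Bool) ∈ F
    · have hsub : F ⊆ {([] : List Bool)} := by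
        intro τ hτ
        simp only [Finset.mem_singleton]
        exact (hpf [] hnil τ hτ (List.nil_prefix)).symm
      calc ∑ τ ∈ F, wt τ ≤ ∑ τ ∈ {([] : List Bool)}, wt τ :=
            Finset.sum_le_sum_of_subset hsub
        _ = 1 := by simp [wt]
    · -- split by head
      have key : ∀ b : Bool, ∑ τ ∈ F.filter (fun τ => τ.head? = some b), wt τ ≤ 2⁻¹ := by
        intro b
        set Fb := F.filter (fun τ => τ.head? = some b) with hFb
        have hcons : ∀ τ ∈ Fb, b :: τ.tail = τ := by
          intro τ hτ
          rw [hFb, Finset.mem_filter] at hτ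
          exact List.cons_head?_tail hτ.2
        have hinj : ∀ x ∈ Fb, ∀ y ∈ Fb, x.tail = y.tail → x = y := by
          intro x hx y hy hxy
          rw [← hcons x hx, ← hcons y hy, hxy]
        have himg : ∑ l ∈ Fb.image List.tail, wt l = ∑ τ ∈ Fb, wt τ.tail :=
          Finset.sum_image hinj
        have hwt : ∀ τ ∈ Fb, wt τ = 2⁻¹ * wt τ.tail := by
          intro τ hτ
          have hc := hcons τ hτ
          rw [wt, wt, ← hc]
          simp only [List.length_cons]
          rw [pow_succ, ENNReal.mul_inv (by simp) (by simp)]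
          rw [List.tail_cons, mul_comm]
        have hih : ∑ l ∈ Fb.image List.tail, wt l ≤ 1 := by
          apply ih
          · intro l hl
            rcases Finset.mem_image.1 hl with ⟨τ, hτ, rfl⟩
            have : τ.length ≤ n + 1 := hlen τ (Finset.mem_filter.1 hτ).1
            have : τ.tail.length = τ.length - 1 := List.length_tail (l := τ)
            omega
          · intro s hs t ht hst
            rcases Finset.mem_image.1 hs with ⟨σ', hσ', rfl⟩
            rcases Finset.mem_image.1 ht with ⟨τ', hτ', rfl⟩
            have h1 : b :: σ'.tail <+: b :: τ'.tail := by
              exact (List.prefix_cons_inj b).2 hst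
            rw [hcons σ' hσ', hcons τ' hτ'] at h1
            have := hpf σ' (Finset.mem_filter.1 hσ').1 τ' (Finset.mem_filter.1 hτ').1 h1
            rw [this]
        calc ∑ τ ∈ Fb, wt τ = ∑ τ ∈ Fb, 2⁻¹ * wt τ.tail := Finset.sum_congr rfl hwt
          _ = 2⁻¹ * ∑ τ ∈ Fb, wt τ.tail := by rw [Finset.mul_sum]
          _ = 2⁻¹ * ∑ l ∈ Fb.image List.tail, wt l := by rw [himg]
          _ ≤ 2⁻¹ * 1 := by
              exact mul_le_mul_right hih _
          _ = 2⁻¹ := by rw [mul_one]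
      have hsplit : ∑ τ ∈ F.filter (fun τ => τ.head? = some false), wt τ
          + ∑ τ ∈ F.filter (fun τ => ¬ (τ.head? = some false)), wt τ = ∑ τ ∈ F, wt τ :=
        Finset.sum_filter_add_sum_filter_not F _ wt
      have heq : F.filter (fun τ => ¬ (τ.head? = some false)) = F.filter (fun τ => τ.head? = some true) := by
        apply Finset.filter_congr
        intro τ hτ
        have hne : τ ≠ [] := by rintro rfl; exact hnil hτ
        rcases τ with _ | ⟨b, t⟩
        · exact absurd rfl hne
        · cases b <;> simp
      rw [← hsplit, heq]
      calc ∑ τ ∈ F.filter (fun τ => τ.head? = some false), wt τ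
            + ∑ τ ∈ F.filter (fun τ => τ.head? = some true), wt τ
          ≤ 2⁻¹ + 2⁻¹ := add_le_add (key false) (key true)
        _ = 1 := ENNReal.inv_two_add_inv_two

lemma kraft (T : Set (List Bool)) (hpf : ∀ σ ∈ T, ∀ τ ∈ T, σ <+: τ → σ = τ) :
    ∑' σ : T, wt (σ : List Bool) ≤ 1 := by
  rw [ENNReal.tsum_eq_iSup_sum]
  apply iSup_le
  intro F
  have : ∑ a ∈ F, wt (a : List Bool) = ∑ τ ∈ F.image (Subtype.val), wt τ := by
    rw [Finset.sum_image (by intro x _ y _ h; exact Subtype.ext h)]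
  rw [this]
  apply kraft_fin ((F.image Subtype.val).sup List.length)
  · intro τ hτ; exact Finset.le_sup hτ
  · intro σ hσ τ hτ h
    rcases Finset.mem_image.1 hσ with ⟨⟨σ', hσ'⟩, _, rfl⟩
    rcases Finset.mem_image.1 hτ with ⟨⟨τ', hτ'⟩, _, rfl⟩
    exact hpf _ hσ' _ hτ' h

/-- Every string is compatible with some element of a prefix-free set of full weight. -/
lemma exists_compatible (S : Set (List Bool)) (hpf : ∀ σ ∈ S, ∀ τ ∈ S, σ <+: τ → σ = τ)
    (hsum : ∑' σ : S, wt (σ : List Bool) = 1) (ρ : List Bool) :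
    ∃ τ ∈ S, τ <+: ρ ∨ ρ <+: τ := by
  by_contra h
  push_neg at h
  have hρ : ρ ∉ S := fun hρ => (h ρ hρ).1 (List.prefix_refl ρ)
  have hpf' : ∀ σ ∈ insert ρ S, ∀ τ ∈ insert ρ S, σ <+: τ → σ = τ := by
    intro σ hσ τ hτ hστ
    rcases Set.mem_insert_iff.1 hσ with rfl | hσ <;>
      rcases Set.mem_insert_iff.1 hτ with h' | hτ'
    · exact h'.symm ▸ rfl
    · exact absurd hστ (h τ hτ').2
    · exact absurd hστ (fun hh => (h σ hσ).1 (h' ▸ hh))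
    · exact hpf σ hσ τ hτ' hστ
  have hk := kraft _ hpf'
  have hins : ∑' σ : (insert ρ S : Set (List Bool)), wt (σ : List Bool)
      = wt ρ + ∑' σ : S, wt (σ : List Bool) := by
    rw [tsum_subtype, tsum_subtype]
    have hpt : ∀ x, (insert ρ S : Set (List Bool)).indicator wt x
        = ({ρ} : Set (List Bool)).indicator wt x + S.indicator wt x := by
      intro x
      by_cases hx : x = ρ
      · subst hx
        simp [Set.indicator_of_mem, Set.indicator_of_notMem, hρ]
      · by_cases hxS : x ∈ S <;>
          simp [Set.indicator_of_mem, Set.indicator_of_notMem, hx, hxS, Set.mem_insert_iff]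
    rw [tsum_congr hpt, ENNReal.tsum_add]
    congr 1
    · rw [← tsum_subtype]
      rw [tsum_eq_single (⟨ρ, rfl⟩ : ({ρ} : Set (List Bool)))]
      · intro b hb
        exfalso; apply hb
        have : (b : List Bool) = ρ := b.2
        exact Subtype.ext this
  rw [hins, hsum] at hk
  have hlt : (1 : ℝ≥0∞) < wt ρ + 1 := by
    rw [add_comm]
    exact ENNReal.lt_add_right ENNReal.one_ne_top (by simp [wt])
  exact absurd (hk.trans_lt hlt) (lt_irrefl _)




open Nat.Partrec (Code)
open Nat.Partrec.Code

/-- number of leading `true`s -/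
def lc (l : List Bool) : ℕ := l.foldr (fun b s => cond b (s + 1) 0) 0

@[simp] lemma lc_nil : lc [] = 0 := rfl
@[simp] lemma lc_cons (b : Bool) (l : List Bool) :
    lc (b :: l) = cond b (lc l + 1) 0 := rfl

/-- the first `m` bits of `v` (padded with `false`) -/
def rmg (m : ℕ) (v : List Bool) : List Bool := (List.range m).map fun i => v.getD i false

/-- decides `u <+: v` -/
def prefb (u v : List Bool) : Bool := decide (u.length ≤ v.length) && decide (rmg u.length v = u)

lemma rmg_eq_take (m : ℕ) (v : List Bool) (h : m ≤ v.length) : rmg m v = v.take m := by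
  apply List.ext_getElem
  · simp [rmg, h]
  · intro i h1 h2
    simp only [rmg, List.length_map, List.length_range] at h1
    simp only [rmg, List.getElem_map, List.getElem_range, List.getElem_take]
    exact List.getD_eq_getElem v false (lt_of_lt_of_le h1 h)

lemma prefb_iff (u v : List Bool) : prefb u v = true ↔ u <+: v := by
  constructor
  · intro h
    simp only [prefb, Bool.and_eq_true, decide_eq_true_eq] at h
    rw [List.prefix_iff_eq_take, ← rmg_eq_take _ _ h.1, h.2]
  · intro h
    simp only [prefb, Bool.and_eq_true, decide_eq_true_eq]
    refine ⟨h.length_le, ?_⟩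
    rw [rmg_eq_take _ _ h.length_le, ← List.prefix_iff_eq_take.1 h]

/-- `goodb e ρ n` : `n` codes a pair `(encode τ, k)` such that `τ` is enumerated into the
`e`-th c.e. set within `k` steps and `τ` is compatible with `ρ`. -/
def goodb (e : ℕ) (ρ : List Bool) (n : ℕ) : Bool :=
  Option.casesOn (Encodable.decode n.unpair.1 : Option (List Bool)) false fun τ =>
    (evaln n.unpair.2 (Denumerable.ofNat Code e) (Encodable.encode τ)).isSome
      && (prefb τ ρ || prefb ρ τ)

def upd (ρ : List Bool) (n : ℕ) : List Bool :=
  Option.casesOn (Encodable.decode n.unpair.1 : Option (List Bool)) ρ fun τ =>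
    bif prefb ρ τ then τ else ρ

def pad (ρ : List Bool) : List Bool :=
  ρ ++ List.replicate (4 * (ρ.length / 4 + 1) + 4 - ρ.length) false

def flagsOf (σ : List Bool) : List Bool :=
  (List.range (lc σ)).map fun i => σ.getD (lc σ + 1 + i) false

def parse (σ : List Bool) : Option (ℕ × List Bool) :=
  if σ.length = 2 * lc σ + 1 then some (lc σ, flagsOf σ) else none

/-- one step of the machine simulation -/
def mstep (s : ℕ × List Bool × List Bool) : Part ((List Bool) ⊕ (ℕ × List Bool × List Bool)) :=
  Option.casesOn s.2.1.head? (Part.some (Sum.inl s.2.2)) fun b =>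
    (Nat.rfind fun n => Part.some (!b || goodb s.1 s.2.2 n)).map fun n =>
      Sum.inr (s.1 + 1, s.2.1.tail, pad (bif b then upd s.2.2 n else s.2.2))

/-- The prefix-free machine. -/
def Mach (σ : List Bool) : Part (List Bool) :=
  (Part.ofOption (parse σ)).bind fun jf =>
    (PFun.fix mstep (0, jf.2, List.replicate 4 false)).map fun ρ => rmg (4 * jf.1 + 4) ρ

-- ### Computability
lemma lc_prim : Primrec lc :=
  Primrec.list_foldr Primrec.id (Primrec.const 0)
    ((Primrec.cond (Primrec.fst.comp Primrec.snd)
      (Primrec.succ.comp (Primrec.snd.comp Primrec.snd)) (Primrec.const 0)).to₂)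

lemma rmg_prim : Primrec₂ rmg :=
  (Primrec.list_map (Primrec.list_range.comp Primrec.fst)
    (((Primrec.list_getD false).comp (Primrec.snd.comp Primrec.fst) Primrec.snd).to₂)).to₂

lemma prefb_prim : Primrec₂ prefb := by
  have h1 : Primrec fun p : List Bool × List Bool => decide (p.1.length ≤ p.2.length) :=
    Primrec.nat_le.comp (Primrec.list_length.comp Primrec.fst)
      (Primrec.list_length.comp Primrec.snd) |>.decide
  have h2 : Primrec fun p : List Bool × List Bool => decide (rmg p.1.length p.2 = p.1) :=
    Primrec.eq.comp (rmg_prim.comp (Primrec.list_length.comp Primrec.fst) Primrec.snd)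
      Primrec.fst |>.decide
  exact Primrec₂.of_eq ((Primrec.cond h1 h2 (Primrec.const false)).to₂) fun u v => by
    by_cases h : u.length ≤ v.length <;> simp [prefb, h]

lemma goodb_prim : Primrec fun q : (ℕ × List Bool) × ℕ => goodb q.1.1 q.1.2 q.2 := by
  have hdec : Primrec fun q : (ℕ × List Bool) × ℕ =>
      (Encodable.decode q.2.unpair.1 : Option (List Bool)) :=
    Primrec.decode.comp (Primrec.fst.comp (Primrec.unpair.comp Primrec.snd))
  have hev : Primrec fun p : ((ℕ × List Bool) × ℕ) × List Bool =>
      (evaln p.1.2.unpair.2 (Denumerable.ofNat Code p.1.1.1) (Encodable.encode p.2)).isSome :=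
    Primrec.option_isSome.comp <| primrec_evaln.comp <|
      Primrec.pair (Primrec.pair
        (Primrec.snd.comp (Primrec.unpair.comp (Primrec.snd.comp Primrec.fst)))
        ((Primrec.ofNat Code).comp (Primrec.fst.comp (Primrec.fst.comp Primrec.fst))))
      (Primrec.encode.comp Primrec.snd)
  have hcomp : Primrec fun p : ((ℕ × List Bool) × ℕ) × List Bool =>
      (prefb p.2 p.1.1.2 || prefb p.1.1.2 p.2) :=
    Primrec.cond (prefb_prim.comp Primrec.snd (Primrec.snd.comp (Primrec.fst.comp Primrec.fst)))
      (Primrec.const true)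
      (prefb_prim.comp (Primrec.snd.comp (Primrec.fst.comp Primrec.fst)) Primrec.snd)
  exact (Primrec.option_casesOn hdec (Primrec.const false)
    ((Primrec.cond hev hcomp (Primrec.const false)).to₂)).of_eq fun ⟨⟨e, ρ⟩, n⟩ => by
      simp only [goodb]
      rcases (Encodable.decode n.unpair.1 : Option (List Bool)) with _ | τ
      · rfl
      · simp only []
        cases h : (evaln n.unpair.2 (Denumerable.ofNat Code e) (Encodable.encode τ)).isSome <;>
          cases h2 : prefb τ ρ <;> simp [h, h2]

lemma upd_prim : Primrec₂ upd := by
  have hdec : Primrec fun p : List Bool × ℕ =>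
      (Encodable.decode p.2.unpair.1 : Option (List Bool)) :=
    Primrec.decode.comp (Primrec.fst.comp (Primrec.unpair.comp Primrec.snd))
  exact (Primrec.option_casesOn hdec Primrec.fst
    ((Primrec.cond (prefb_prim.comp (Primrec.fst.comp Primrec.fst) Primrec.snd)
      Primrec.snd (Primrec.fst.comp Primrec.fst)).to₂)).to₂

lemma replicate_false_prim : Primrec fun n => List.replicate n false :=
  (Primrec.list_map Primrec.list_range ((Primrec.const false).comp₂ Primrec₂.right)).of_eq
    fun n => by rw [List.map_const', List.length_range]

lemma pad_prim : Primrec pad :=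
  Primrec.list_append.comp Primrec.id <| replicate_false_prim.comp <|
    Primrec.nat_sub.comp
      (Primrec.nat_add.comp
        (Primrec.nat_mul.comp (Primrec.const 4)
          (Primrec.nat_add.comp (Primrec.nat_div.comp Primrec.list_length (Primrec.const 4))
            (Primrec.const 1)))
        (Primrec.const 4))
      Primrec.list_length

lemma flagsOf_prim : Primrec flagsOf :=
  Primrec.list_map (Primrec.list_range.comp lc_prim)
    (((Primrec.list_getD false).comp (Primrec.fst)
      (Primrec.nat_add.comp
        (Primrec.succ.comp (lc_prim.comp Primrec.fst)) Primrec.snd)).to₂)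

lemma parse_prim : Primrec parse :=
  Primrec.ite
    (Primrec.eq.comp Primrec.list_length
      (Primrec.succ.comp (Primrec.nat_mul.comp (Primrec.const 2) lc_prim)))
    (Primrec.option_some.comp (Primrec.pair lc_prim flagsOf_prim))
    (Primrec.const none)

lemma mstep_partrec : Partrec mstep := by
  have hp : Computable fun q : ((ℕ × List Bool × List Bool) × Bool) × ℕ =>
      (!q.1.2 || goodb q.1.1.1 q.1.1.2.2 q.2) :=
    (Primrec.cond (Primrec.not.comp (Primrec.snd.comp Primrec.fst))
      (Primrec.const true)
      (goodb_prim.comp (Primrec.pair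
        (Primrec.pair (Primrec.fst.comp (Primrec.fst.comp Primrec.fst))
          (Primrec.snd.comp (Primrec.snd.comp (Primrec.fst.comp Primrec.fst))))
        Primrec.snd))).to_comp
  have hrf : Partrec fun q : (ℕ × List Bool × List Bool) × Bool =>
      Nat.rfind fun n => Part.some (!q.2 || goodb q.1.1 q.1.2.2 n) :=
    (Partrec.rfind ((hp.to₂).partrec₂)).of_eq fun q => by
      apply congrArg; funext n; rfl
  have hout : Computable fun p : ((ℕ × List Bool × List Bool) × Bool) × ℕ =>
      (Sum.inr (p.1.1.1 + 1, p.1.1.2.1.tail,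
        pad (bif p.1.2 then upd p.1.1.2.2 p.2 else p.1.1.2.2)) :
        (List Bool) ⊕ (ℕ × List Bool × List Bool)) :=
    (Primrec.sumInr.comp (Primrec.pair
      (Primrec.succ.comp (Primrec.fst.comp (Primrec.fst.comp Primrec.fst)))
      (Primrec.pair
        (Primrec.list_tail.comp
          (Primrec.fst.comp (Primrec.snd.comp (Primrec.fst.comp Primrec.fst))))
        (pad_prim.comp (Primrec.cond (Primrec.snd.comp Primrec.fst)
          (upd_prim.comp
            (Primrec.snd.comp (Primrec.snd.comp (Primrec.fst.comp Primrec.fst)))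
            Primrec.snd)
          (Primrec.snd.comp (Primrec.snd.comp (Primrec.fst.comp Primrec.fst)))))))).to_comp
  apply (Partrec.optionCasesOn_right
    (o := fun s : ℕ × List Bool × List Bool => s.2.1.head?)
    (f := fun s : ℕ × List Bool × List Bool => (Sum.inl s.2.2 : (List Bool) ⊕ _))
    (g := fun s b => (Nat.rfind fun n => Part.some (!b || goodb s.1 s.2.2 n)).map fun n =>
      Sum.inr (s.1 + 1, s.2.1.tail, pad (bif b then upd s.2.2 n else s.2.2)))
    ((Primrec.list_head?.comp (Primrec.fst.comp Primrec.snd)).to_comp)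
    ((Primrec.sumInl.comp (Primrec.snd.comp Primrec.snd)).to_comp)
    ((Partrec.map hrf (hout.to₂)).to₂)).of_eq fun s => by
      rcases s with ⟨e, fl, ρ⟩
      rcases fl with _ | ⟨b, l⟩ <;> rfl

lemma Mach_partrec : Partrec Mach := by
  have hfix : Partrec fun jf : (List Bool) × (ℕ × List Bool) =>
      PFun.fix mstep (0, jf.2.2, List.replicate 4 false) :=
    (mstep_partrec.fix).comp
      ((Primrec.pair (Primrec.const 0)
        (Primrec.pair (Primrec.snd.comp Primrec.snd)
          (Primrec.const (List.replicate 4 false)))).to_comp)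
  have hmap : Computable fun p : ((List Bool) × (ℕ × List Bool)) × (List Bool) =>
      rmg (4 * p.1.2.1 + 4) p.2 :=
    (rmg_prim.comp
      (Primrec.nat_add.comp
        (Primrec.nat_mul.comp (Primrec.const 4)
          (Primrec.fst.comp (Primrec.snd.comp Primrec.fst)))
        (Primrec.const 4))
      Primrec.snd).to_comp
  exact Partrec.bind (Computable.ofOption parse_prim.to_comp)
    ((Partrec.map (hfix.comp ((Primrec.pair Primrec.fst Primrec.snd).to_comp)) (hmap.to₂)).to₂)


-- ### The construction
open Nat.Partrec (Code)
open Nat.Partrec.Code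

open Classical in
noncomputable def rho : ℕ → List Bool
  | 0 => List.replicate 4 false
  | e + 1 => pad (if h : ∃ n, goodb e (rho e) n = true then upd (rho e) (Nat.find h) else rho e)

open Classical in
noncomputable def flag (e : ℕ) : Bool := decide (∃ n, goodb e (rho e) n = true)

lemma flag_eq_true {e : ℕ} (h : ∃ n, goodb e (rho e) n = true) : flag e = true := by
  simp [flag, h]

lemma flag_eq_false {e : ℕ} (h : ¬ ∃ n, goodb e (rho e) n = true) : flag e = false := by
  simp [flag, h]

noncomputable def tf (e k : ℕ) : List Bool := (List.range k).map fun i => flag (e + i)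

lemma rho_zero : rho 0 = List.replicate 4 false := by rw [rho]

noncomputable def xseq (i : ℕ) : Bool := (rho (i + 1)).getD i false

lemma pad_prefix (ρ : List Bool) : ρ <+: pad ρ := ⟨_, rfl⟩

lemma pad_length (ρ : List Bool) : (pad ρ).length = 4 * (ρ.length / 4 + 1) + 4 := by
  have h1 := Nat.div_add_mod ρ.length 4
  have h2 : ρ.length % 4 < 4 := Nat.mod_lt _ (by norm_num)
  simp only [pad, List.length_append, List.length_replicate]
  omega

lemma pad_length_lt (ρ : List Bool) : ρ.length < (pad ρ).length := by
  rw [pad_length]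
  have h1 := Nat.div_add_mod ρ.length 4
  have h2 : ρ.length % 4 < 4 := Nat.mod_lt _ (by norm_num)
  omega

lemma upd_prefix (ρ : List Bool) (n : ℕ) : ρ <+: upd ρ n := by
  rw [upd]
  rcases (Encodable.decode n.unpair.1 : Option (List Bool)) with _ | τ
  · exact List.prefix_refl ρ
  · simp only []
    cases h : prefb ρ τ
    · exact List.prefix_refl ρ
    · simpa using (prefb_iff ρ τ).1 h

lemma rho_prefix_succ (e : ℕ) : rho e <+: rho (e + 1) := by
  rw [rho]
  split
  · exact (upd_prefix _ _).trans (pad_prefix _)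
  · exact pad_prefix _

lemma rho_prefix {a b : ℕ} (h : a ≤ b) : rho a <+: rho b := by
  induction b with
  | zero => rw [Nat.le_zero.1 h]
  | succ b ih =>
    rcases Nat.lt_or_ge a (b + 1) with h' | h'
    · exact (ih (Nat.lt_succ_iff.1 h')).trans (rho_prefix_succ b)
    · rw [le_antisymm h h']

lemma pad_length_ge (ρ : List Bool) : ρ.length + 5 ≤ (pad ρ).length := by
  rw [pad_length]
  have h1 := Nat.div_add_mod ρ.length 4
  have h2 : ρ.length % 4 < 4 := Nat.mod_lt _ (by norm_num)
  omega

lemma rho_length (e : ℕ) : 4 * e + 4 ≤ (rho e).length := by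
  induction e with
  | zero => simp [rho_zero]
  | succ e ih =>
    have hb : ∀ z : List Bool, (rho e).length ≤ z.length →
        4 * (e + 1) + 4 ≤ (pad z).length := by
      intro z hz
      have := pad_length_ge z
      omega
    rw [rho]
    split
    · exact hb _ (upd_prefix _ _).length_le
    · exact hb _ (le_refl _)

lemma xseq_eq {k i : ℕ} (h : i < (rho k).length) : xseq i = (rho k).getD i false := by
  rw [xseq]
  rcases Nat.le_total (i + 1) k with h' | h'
  · rcases rho_prefix h' with ⟨t, ht⟩
    rw [← ht, List.getD_append]
    have := rho_length (i + 1)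
    omega
  · rcases rho_prefix h' with ⟨t, ht⟩
    rw [← ht, List.getD_append _ _ _ _ h]

lemma rmg_rho_eq_pre {k m : ℕ} (h : m ≤ (rho k).length) : rmg m (rho k) = pre xseq m := by
  apply List.ext_getElem
  · simp [rmg, pre]
  · intro i h1 h2
    simp only [rmg, List.length_map, List.length_range] at h1
    simp only [rmg, List.getElem_map, List.getElem_range, pre, List.getElem_ofFn]
    rw [xseq_eq (lt_of_lt_of_le h1 h)]

-- ### Machine correctness on true flags
lemma tf_succ (e k : ℕ) : tf e (k + 1) = flag e :: tf (e + 1) k := by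
  rw [tf, tf, List.range_succ_eq_map, List.map_cons, List.map_map, Nat.add_zero]
  congr 1
  apply List.map_congr_left
  intro i _
  simp only [Function.comp_apply]
  congr 1
  omega

lemma mstep_succ (e k : ℕ) :
    mstep (e, tf e (k + 1), rho e) = Part.some (Sum.inr (e + 1, tf (e + 1) k, rho (e + 1))) := by
  classical
  rw [tf_succ]
  simp only [mstep, List.head?_cons, List.tail_cons]
  by_cases hEx : ∃ n, goodb e (rho e) n = true
  · have hd : flag e = true := flag_eq_true hEx
    rw [hd]
    have hrf : (Nat.rfind fun n => Part.some (!true || goodb e (rho e) n))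
        = Part.some (Nat.find hEx) := by
      apply Part.eq_some_iff.2
      refine Nat.mem_rfind.2 ?_
      constructor
      · simp only [Bool.not_true, Bool.false_or]
        exact Part.mem_some_iff.2 (Nat.find_spec hEx).symm
      · intro m hm
        have hm' : goodb e (rho e) m = false := by
          cases h' : goodb e (rho e) m
          · rfl
          · exact absurd h' (Nat.find_min hEx hm)
        simp [hm']
    have hpad : pad (bif true then upd (rho e) (Nat.find hEx) else rho e) = rho (e + 1) := by
      show pad (upd (rho e) (Nat.find hEx)) = rho (e + 1)
      rw [rho, dif_pos hEx]
    rw [hrf, Part.map_some, hpad]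
  · have hd : flag e = false := flag_eq_false hEx
    rw [hd]
    have hrf : (Nat.rfind fun n => Part.some (!false || goodb e (rho e) n))
        = Part.some 0 := by
      apply Part.eq_some_iff.2
      refine Nat.mem_rfind.2 ?_
      exact ⟨Part.mem_some_iff.2 rfl, fun hm => absurd hm (Nat.not_lt_zero _)⟩
    have hpad : pad (bif false then upd (rho e) 0 else rho e) = rho (e + 1) := by
      show pad (rho e) = rho (e + 1)
      rw [rho, dif_neg hEx]
    rw [hrf, Part.map_some, hpad]

lemma fix_rho (k : ℕ) : ∀ e : ℕ, PFun.fix mstep (e, tf e k, rho e) = Part.some (rho (e + k)) := by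
  induction k with
  | zero =>
    intro e
    have h : tf e 0 = [] := by simp [tf]
    rw [h]
    apply Part.eq_some_iff.2
    apply PFun.fix_stop
    simp only [mstep, List.head?_nil]
    exact Part.mem_some _
  | succ k ih =>
    intro e
    have hmem : Sum.inr (e + 1, tf (e + 1) k, rho (e + 1)) ∈ mstep (e, tf e (k + 1), rho e) := by
      rw [mstep_succ e k]
      exact Part.mem_some _
    rw [PFun.fix_fwd_eq hmem, ih (e + 1), show e + 1 + k = e + (k + 1) from by omega]

lemma lc_header (j : ℕ) (l : List Bool) : lc (List.replicate j true ++ false :: l) = j := by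
  induction j with
  | zero => simp
  | succ j ih => rw [List.replicate_succ, List.cons_append, lc_cons, ih]; rfl

noncomputable def inp (j : ℕ) : List Bool := List.replicate j true ++ false :: tf 0 j

lemma tf_length (e k : ℕ) : (tf e k).length = k := by simp [tf]

lemma inp_length (j : ℕ) : (inp j).length = 2 * j + 1 := by
  simp [inp, tf_length]
  omega

lemma parse_inp (j : ℕ) : parse (inp j) = some (j, tf 0 j) := by
  have hlc : lc (inp j) = j := lc_header j (tf 0 j)
  have hflag : flagsOf (inp j) = tf 0 j := by
    rw [flagsOf, hlc, tf]
    apply List.map_congr_left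
    intro i hi
    rw [List.mem_range] at hi
    calc (inp j).getD (j + 1 + i) false
        = (false :: tf 0 j).getD (j + 1 + i - j) false := by
          rw [inp, List.getD_append_right _ _ _ _ (by rw [List.length_replicate]; omega),
            List.length_replicate]
      _ = (tf 0 j).getD i false := by
          rw [show j + 1 + i - j = i + 1 from by omega, List.getD_cons_succ]
      _ = flag (0 + i) := by
          rw [tf, List.getD_eq_getElem _ _ (by rw [List.length_map, List.length_range]; exact hi)]
          simp
  rw [parse, hlc, if_pos (by rw [inp_length]), hflag]

lemma Mach_inp (j : ℕ) : Mach (inp j) = Part.some (pre xseq (4 * j + 4)) := by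
  rw [Mach, parse_inp]
  have h1 : (Part.ofOption (some (j, tf 0 j))) = Part.some (j, tf 0 j) := Part.coe_some _
  rw [h1, Part.bind_some]
  have h2 : (List.replicate 4 false : List Bool) = rho 0 := rho_zero.symm
  rw [h2]
  have h3 := fix_rho j 0
  simp only [Nat.zero_add] at h3
  rw [h3, Part.map_some]
  congr 1
  exact rmg_rho_eq_pre (by have := rho_length j; omega)




lemma lc_prefix : ∀ {σ τ : List Bool}, σ <+: τ → lc σ < σ.length → lc τ = lc σ := by
  intro σ
  induction σ with
  | nil => intro τ _ hl; simp at hl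
  | cons b s ih =>
    intro τ h hl
    rcases h with ⟨t, rfl⟩
    cases b
    · simp
    · simp only [List.cons_append, lc_cons, cond_true]
      simp only [lc_cons, cond_true, List.length_cons] at hl
      rw [ih ⟨t, rfl⟩ (by omega)]

lemma Mach_dom_length {σ : List Bool} (h : (Mach σ).Dom) : σ.length = 2 * lc σ + 1 := by
  by_contra hne
  rcases Part.dom_iff_mem.1 h with ⟨a, ha⟩
  rw [Mach] at ha
  rcases Part.mem_bind_iff.1 ha with ⟨b, hb, _⟩
  rw [parse, if_neg hne] at hb
  exact Option.not_mem_none b (Part.mem_ofOption.1 hb)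

lemma Mach_prefixFree : ∀ σ τ : List Bool, σ ∈ PFun.Dom Mach →
    τ ∈ PFun.Dom Mach → σ <+: τ → σ = τ := by
  intro σ τ hσ hτ h
  have h1 := Mach_dom_length hσ
  have h2 := Mach_dom_length hτ
  have h3 : lc σ < σ.length := by omega
  have h4 := lc_prefix h h3
  exact h.eq_of_length (by omega)

lemma KM_Mach_le (j : ℕ) : KM Mach (pre xseq (4 * j + 4)) ≤ ((2 * j + 1 : ℕ) : ℕ∞) := by
  apply sInf_le
  refine ⟨inp j, ?_, ?_⟩
  · rw [Mach_inp]; exact Part.mem_some _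
  · rw [inp_length]

lemma ce_code {S : Set (List Bool)} (h : CE S) :
    ∃ c : Code, ∀ τ : List Bool, τ ∈ S ↔ (c.eval (Encodable.encode τ)).Dom := by
  obtain ⟨c, hc⟩ := Nat.Partrec.Code.exists_code.1 h
  refine ⟨c, fun τ => ?_⟩
  rw [hc]
  simp only [Encodable.encodek, Part.coe_some, Part.bind_some]
  constructor
  · intro hτ
    exact ⟨hτ, trivial⟩
  · intro hd
    exact hd.fst

lemma prefix_rho_pre {τ : List Bool} {k : ℕ} (h : τ <+: rho k) : pre xseq τ.length = τ := by
  rw [← rmg_rho_eq_pre (k := k) h.length_le, rmg_eq_take _ _ h.length_le,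
    ← List.prefix_iff_eq_take.1 h]

lemma kurtz_xseq : KurtzRandom xseq := by
  intro S hCE hpf hsum
  obtain ⟨c, hc⟩ := ce_code hCE
  set e := Encodable.encode c with he
  obtain ⟨τ, hτS, hcompat⟩ := exists_compatible S hpf hsum (rho e)
  -- τ is enumerated at some stage
  have hdom : (c.eval (Encodable.encode τ)).Dom := (hc τ).1 hτS
  rcases Part.dom_iff_mem.1 hdom with ⟨v, hv⟩
  rcases Nat.Partrec.Code.evaln_complete.1 hv with ⟨k, hk⟩
  have hEx : ∃ n, goodb e (rho e) n = true := by
    refine ⟨Nat.pair (Encodable.encode τ) k, ?_⟩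
    rw [goodb]
    simp only [Nat.unpair_pair, Encodable.encodek]
    rw [he, Denumerable.ofNat_encode]
    have h1 : (Nat.Partrec.Code.evaln k c (Encodable.encode τ)).isSome = true := by
      rw [Option.isSome_iff_exists]; exact ⟨v, hk⟩
    rw [h1]
    have h2 : (prefb τ (rho e) || prefb (rho e) τ) = true := by
      rcases hcompat with h' | h'
      · rw [(prefb_iff _ _).2 h']; simp
      · rw [(prefb_iff _ _).2 h']; simp
    rw [h2]
    rfl
  -- the construction acts at stage e
  set n₀ := Nat.find hEx with hn₀
  have hg : goodb e (rho e) n₀ = true := Nat.find_spec hEx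
  rw [goodb] at hg
  rcases hd : (Encodable.decode n₀.unpair.1 : Option (List Bool)) with _ | τ₀
  · rw [hd] at hg; exact absurd hg (by simp)
  rw [hd] at hg
  simp only [Bool.and_eq_true, Bool.or_eq_true] at hg
  obtain ⟨hev, hcomp₀⟩ := hg
  -- τ₀ ∈ S
  have hτ₀S : τ₀ ∈ S := by
    rw [he, Denumerable.ofNat_encode] at hev
    rcases Option.isSome_iff_exists.1 hev with ⟨v₀, hv₀⟩
    exact (hc τ₀).2 (Part.dom_iff_mem.2 ⟨v₀, Nat.Partrec.Code.evaln_sound hv₀⟩)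
  refine ⟨τ₀, hτ₀S, ?_⟩
  -- τ₀ is a prefix of x
  rcases hcomp₀ with h' | h'
  · exact prefix_rho_pre ((prefb_iff _ _).1 h')
  · -- rho e <+: τ₀, so the construction adopts τ₀
    have hupd : upd (rho e) n₀ = τ₀ := by
      rw [upd, hd]
      simp only [h', cond_true]
    have hrho : rho (e + 1) = pad (upd (rho e) n₀) := by
      rw [rho, dif_pos hEx]
    have hpre : τ₀ <+: rho (e + 1) := by
      rw [hrho, hupd]
      exact pad_prefix τ₀
    exact prefix_rho_pre hpre



/-- there exists a Kurtz random binary sequence that is not strongly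
Kurtz random. -/
theorem exists_kurtzRandom_not_stronglyKurtzRandom
    (U : List Bool →. List Bool) (hU : OptimalPF U) :
    ∃ x : ℕ → Bool, KurtzRandom x ∧ ¬ StronglyKurtzRandom U x := by
  refine ⟨xseq, kurtz_xseq, ?_⟩
  obtain ⟨c, hc⟩ := hU.2 Mach ⟨Mach_partrec, Mach_prefixFree⟩
  apply not_not_intro
  refine ⟨fun n => 4 * (n + c + 1) + 4, ?_, ?_⟩
  · have hp : Primrec fun n : ℕ => 4 * (n + c + 1) + 4 :=
      Primrec.nat_add.comp
        (Primrec.nat_mul.comp (Primrec.const 4)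
          (Primrec.nat_add.comp (Primrec.nat_add.comp Primrec.id (Primrec.const c))
            (Primrec.const 1)))
        (Primrec.const 4)
    exact hp.to_comp
  · intro n
    calc KM U (pre xseq (4 * (n + c + 1) + 4))
        ≤ KM Mach (pre xseq (4 * (n + c + 1) + 4)) + (c : ℕ∞) := hc _
      _ ≤ ((2 * (n + c + 1) + 1 : ℕ) : ℕ∞) + (c : ℕ∞) :=
          add_le_add_left (KM_Mach_le (n + c + 1)) _
      _ = ((2 * (n + c + 1) + 1 + c : ℕ) : ℕ∞) := by push_cast; ring
      _ ≤ ((4 * (n + c + 1) + 4 - n : ℕ) : ℕ∞) := by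
          rw [Nat.cast_le]
          omega


end Paper
end

section
/- For every optimal prefix-free machine U (with K = K_U): every binary sequence x with effective packing dimension Dim(x) < 1 is not strongly Kurtz random. -/
open scoped ENNReal

namespace Paper

/-- every binary sequence with effective packing dimension `< 1` is not
strongly Kurtz random. -/
theorem not_stronglyKurtzRandom_of_eDimSup_lt_one
    (U : List Bool →. List Bool) (hU : OptimalPF U)
    (x : ℕ → Bool) (h : eDimSup U x < 1) :
    ¬ StronglyKurtzRandom U x := by
  intro hSK
  apply hSK
  set s := eDimSup U x with hs_def
  have hs_ne_top : s ≠ ⊤ := h.ne_top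
  have hpos : (1 : ℝ≥0∞) - s ≠ 0 := by
    simpa [tsub_eq_zero_iff_le] using h.not_ge
  obtain ⟨n, hinv⟩ := ENNReal.exists_inv_nat_lt hpos
  have hinv_lt1 : ((n : ℝ≥0∞))⁻¹ < 1 := lt_of_lt_of_le hinv tsub_le_self
  have hn2 : 2 ≤ n := by
    by_contra hc
    interval_cases n <;> simp_all
  have hn0 : (n : ℝ≥0∞) ≠ 0 := by
    exact_mod_cast Nat.cast_ne_zero.mpr (by omega)
  have hn_top : (n : ℝ≥0∞) ≠ ⊤ := ENNReal.natCast_ne_top n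
  have hinv_ne_top : ((n : ℝ≥0∞))⁻¹ ≠ ⊤ := ENNReal.inv_ne_top.mpr hn0
  -- key: s < (n-1)/n
  have hkey : s < ((n - 1 : ℕ) : ℝ≥0∞) / (n : ℝ≥0∞) := by
    have h1 : s + (n : ℝ≥0∞)⁻¹ < 1 := by
      calc s + (n : ℝ≥0∞)⁻¹ < s + (1 - s) := by
            exact ENNReal.add_lt_add_left hs_ne_top hinv
        _ = 1 := add_tsub_cancel_of_le h.le
    have h2 : ((n - 1 : ℕ) : ℝ≥0∞) / (n : ℝ≥0∞) + (n : ℝ≥0∞)⁻¹ = 1 := by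
      rw [← one_div, ENNReal.div_add_div_same]
      have hc1 : ((n - 1 : ℕ) : ℝ≥0∞) = (n : ℝ≥0∞) - 1 := by exact_mod_cast ENNReal.natCast_sub n 1
      have hc2 : ((n - 1 : ℕ) : ℝ≥0∞) + 1 = (n : ℝ≥0∞) := by
        rw [hc1, tsub_add_cancel_of_le (by exact_mod_cast (by omega : 1 ≤ n))]
      rw [hc2, ENNReal.div_self hn0 hn_top]
    have h3 := h1.trans_eq h2.symm
    exact (ENNReal.add_lt_add_iff_right hinv_ne_top).mp h3
  have hev : ∀ᶠ m in Filter.atTop,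
      ((KM U (pre x m) : ℝ≥0∞)) / (m : ℝ≥0∞) < ((n - 1 : ℕ) : ℝ≥0∞) / (n : ℝ≥0∞) :=
    Filter.eventually_lt_of_limsup_lt hkey
  obtain ⟨N, hN⟩ := Filter.eventually_atTop.mp hev
  refine ⟨fun j => n * (j + N + 1), ?_, ?_⟩
  · exact (Primrec.nat_mul.comp (Primrec.const n)
      (Primrec.nat_add.comp (Primrec.nat_add.comp Primrec.id (Primrec.const N))
        (Primrec.const 1))).to_comp
  · intro j
    show KM U (pre x (n * (j + N + 1))) ≤ ((n * (j + N + 1) - j : ℕ) : ℕ∞)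
    set t := j + N + 1 with ht
    have hmN : N ≤ n * t := by
      calc N ≤ t := by omega
        _ ≤ n * t := Nat.le_mul_of_pos_left t (by omega)
    have hbound := hN (n * t) hmN
    have hm0 : ((n * t : ℕ) : ℝ≥0∞) ≠ 0 :=
      Nat.cast_ne_zero.mpr (Nat.mul_pos (by omega) (by omega)).ne'
    have hm_top : ((n * t : ℕ) : ℝ≥0∞) ≠ ⊤ := ENNReal.natCast_ne_top _
    have hK_ne_top : KM U (pre x (n * t)) ≠ ⊤ := by
      intro htop
      rw [htop] at hbound
      simp only [ENat.toENNReal_top] at hbound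
      rw [ENNReal.top_div_of_ne_top hm_top] at hbound
      exact not_top_lt hbound
    obtain ⟨a, ha⟩ := WithTop.ne_top_iff_exists.mp hK_ne_top
    rw [← ha]
    have hbound' : (a : ℝ≥0∞) / ((n * t : ℕ) : ℝ≥0∞) < ((n - 1 : ℕ) : ℝ≥0∞) / (n : ℝ≥0∞) := by
      rw [← ha] at hbound
      have e : ENat.toENNReal (WithTop.some a : ℕ∞) = (a : ℝ≥0∞) := ENat.toENNReal_coe a
      rw [e] at hbound
      simpa using hbound
    have hlt : (a : ℝ≥0∞) < ((n - 1 : ℕ) : ℝ≥0∞) / (n : ℝ≥0∞) * ((n * t : ℕ) : ℝ≥0∞) :=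
      (ENNReal.div_lt_iff (Or.inl hm0) (Or.inl hm_top)).mp hbound'
    have heq : ((n - 1 : ℕ) : ℝ≥0∞) / (n : ℝ≥0∞) * ((n * t : ℕ) : ℝ≥0∞)
        = (((n - 1) * t : ℕ) : ℝ≥0∞) := by
      push_cast
      rw [div_eq_mul_inv, mul_assoc, ← mul_assoc ((n : ℝ≥0∞))⁻¹,
        ENNReal.inv_mul_cancel hn0 hn_top, one_mul]
    rw [heq] at hlt
    have hna : a < (n - 1) * t := by exact_mod_cast hlt
    have hna2 : a < n * t - t := by
      have : (n - 1) * t = n * t - t := by rw [Nat.sub_mul, one_mul]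
      omega
    have h2 : t ≤ n * t := Nat.le_mul_of_pos_left t (by omega)
    have hfin : a ≤ n * t - j := by omega
    have : ((a : ℕ) : ℕ∞) ≤ ((n * t - j : ℕ) : ℕ∞) := by exact_mod_cast hfin
    exact this

end Paper
end

section
/- No regular real is bi-immune: if A ⊆ ℕ is a set such that the real x_A = ∑_{j∈A} 2^{-(j+1)} is regular, then A is not bi-immune. -/
open scoped ENNReal

namespace Paper

section Aux
open Nat.Partrec (Code)
open Nat.Partrec.Code
set_option linter.unusedSectionVars false
set_option linter.unusedTactic false
set_option linter.unusedVariables false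

/-- From a c.e. set, extract a code whose staged evaluation enumerates it. -/
lemma ce_code_s18 {p : Set ℕ} (h : CE p) :
    ∃ c : Code, ∀ a, a ∈ p ↔ ∃ k, (evaln k c a).isSome := by
  have h' : Partrec fun a : ℕ => (Part.assert (a ∈ p) fun _ => Part.some ()).map
      (fun _ => (0 : ℕ)) := h.map ((Computable.const 0).comp Computable.fst).to₂
  obtain ⟨c, hc⟩ := exists_code.1 (Partrec.nat_iff.1 h')
  refine ⟨c, fun a => ?_⟩
  have hdom : a ∈ p ↔ (eval c a).Dom := by
    rw [hc]; simp [Part.assert]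
  rw [hdom, Part.dom_iff_mem]
  constructor
  · rintro ⟨x, hx⟩
    obtain ⟨k, hk⟩ := evaln_complete.1 hx
    exact ⟨k, Option.isSome_iff_exists.2 ⟨x, hk⟩⟩
  · rintro ⟨k, hk⟩
    obtain ⟨x, hx⟩ := Option.isSome_iff_exists.1 hk
    exact ⟨x, evaln_complete.2 ⟨k, hx⟩⟩

lemma evaln_isSome_mono {c : Code} {a : ℕ} {k k' : ℕ} (h : k ≤ k')
    (hk : (evaln k c a).isSome) : (evaln k' c a).isSome := by
  obtain ⟨x, hx⟩ := Option.isSome_iff_exists.1 hk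
  exact Option.isSome_iff_exists.2 ⟨x, evaln_mono h hx⟩

/-- A set with a computably verifiable witness predicate is c.e. -/
lemma ce_of_exists {p : Set ℕ} (q : ℕ → ℕ → Bool) (hq : Primrec₂ q)
    (hp : ∀ a, a ∈ p ↔ ∃ s, q a s = true) : CE p := by
  have heq : (fun a : ℕ => Part.assert (a ∈ p) fun _ => Part.some ())
      = fun a : ℕ => (Nat.rfind (fun s => Part.some (q a s))).map (fun _ => ()) := by
    funext a
    apply Part.ext
    intro u
    have hu : u = () := rfl
    subst hu
    simp only [Part.mem_map_iff, Part.mem_assert_iff, Part.mem_some_iff]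
    constructor
    · rintro ⟨ha, -⟩
      obtain ⟨s, hs⟩ := (hp a).1 ha
      have : (Nat.rfind fun s => Part.some (q a s)).Dom :=
        Nat.rfind_dom.2 ⟨s, by simp [hs], fun _ => trivial⟩
      exact ⟨_, Part.get_mem this, trivial⟩
    · rintro ⟨s, hs, -⟩
      have := Nat.rfind_spec hs
      simp only [Part.mem_some_iff] at this
      exact ⟨(hp a).2 ⟨s, this.symm⟩, trivial⟩
  rw [CE, heq]
  have hpr : Partrec₂ (fun (a s : ℕ) => (Part.some (q a s) : Part Bool)) :=
    (hq.to_comp).partrec₂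
  exact (Partrec.rfind hpr).map ((Computable.const ()).comp Computable.fst).to₂


noncomputable def gg (k : ℕ) : ℝ := (2:ℝ) ^ (-((k:ℤ) + 1))

lemma gg_eq (k : ℕ) : gg k = ((1:ℝ)/2) ^ (k+1) := by
  rw [gg, one_div, inv_pow, ← zpow_natCast, ← zpow_neg]
  congr 1

lemma gg_pos (k : ℕ) : 0 < gg k := by rw [gg_eq]; positivity

lemma gg_nonneg (k : ℕ) : 0 ≤ gg k := (gg_pos k).le

lemma summable_gg : Summable gg := by
  have : Summable fun k : ℕ => ((1:ℝ)/2) * ((1/2:ℝ)) ^ k :=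
    (summable_geometric_of_lt_one (by norm_num) (by norm_num)).mul_left _
  exact this.congr fun k => by rw [gg_eq, pow_succ]; ring

lemma tsum_gg_add (m : ℕ) : ∑' k : ℕ, gg (k + m) = ((1:ℝ)/2) ^ m := by
  have h1 : ∀ k : ℕ, gg (k + m) = ((1/2:ℝ))^m * ((1:ℝ)/2) * ((1/2:ℝ))^k := by
    intro k; rw [gg_eq]; ring
  rw [tsum_congr h1, tsum_mul_left, tsum_geometric_of_lt_one (by norm_num) (by norm_num)]
  rw [show (1 - (1:ℝ)/2)⁻¹ = 2 by norm_num, mul_assoc]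
  norm_num

lemma summable_mul_gg (t : ℕ → ℕ) (n : ℕ) (ht : ∀ k, t k ≤ n) :
    Summable fun k => (t k : ℝ) * gg k := by
  apply Summable.of_nonneg_of_le (fun k => mul_nonneg (Nat.cast_nonneg _) (gg_nonneg _))
    (fun k => ?_) (summable_gg.mul_left (n:ℝ))
  exact mul_le_mul_of_nonneg_right (by exact_mod_cast ht k) (gg_nonneg k)

noncomputable def tl (t : ℕ → ℕ) (m : ℕ) : ℝ := ∑' k, (t (k+m) : ℝ) * gg (k+m)

lemma sum_add_tl (t : ℕ → ℕ) (n : ℕ) (ht : ∀ k, t k ≤ n) (m : ℕ) :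
    (∑' k, (t k : ℝ) * gg k) = (∑ k ∈ Finset.range m, (t k : ℝ) * gg k) + tl t m :=
  (Summable.sum_add_tsum_nat_add m (summable_mul_gg t n ht)).symm

lemma tl_nonneg (t : ℕ → ℕ) (m : ℕ) : 0 ≤ tl t m :=
  tsum_nonneg fun k => mul_nonneg (Nat.cast_nonneg _) (gg_nonneg _)

lemma tl_lt (t : ℕ → ℕ) (n : ℕ) (ht : ∀ k, t k ≤ n) (m : ℕ)
    (hx : ∃ k, t (k + m) < n) : tl t m < (n:ℝ) * ((1:ℝ)/2) ^ m := by
  obtain ⟨k0, hk0⟩ := hx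
  have h1 : tl t m < ∑' k, (n:ℝ) * gg (k+m) := by
    apply Summable.tsum_lt_tsum (i := k0)
      (fun k => (mul_le_mul_of_nonneg_right (by exact_mod_cast ht (k+m)) (gg_nonneg _) :
        (t (k+m) : ℝ) * gg (k+m) ≤ (n:ℝ) * gg (k+m)))
      (by
        apply mul_lt_mul_of_pos_right _ (gg_pos _)
        exact_mod_cast hk0)
      ((summable_mul_gg t n ht).comp_injective (add_left_injective m))
      ((summable_gg.mul_left (n:ℝ)).comp_injective (add_left_injective m))
  calc tl t m < ∑' k, (n:ℝ) * gg (k+m) := h1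
    _ = (n:ℝ) * ((1:ℝ)/2)^m := by rw [tsum_mul_left, tsum_gg_add]

lemma tl_pos (t : ℕ → ℕ) (n : ℕ) (ht : ∀ k, t k ≤ n) (m : ℕ)
    (hx : ∃ k, 0 < t (k + m)) : 0 < tl t m := by
  obtain ⟨k0, hk0⟩ := hx
  have h1 : (t (k0+m) : ℝ) * gg (k0+m) ≤ tl t m := by
    apply Summable.le_tsum ((summable_mul_gg t n ht).comp_injective (add_left_injective m))
    intro k _
    exact mul_nonneg (Nat.cast_nonneg _) (gg_nonneg _)
  have h2 : 0 < (t (k0+m) : ℝ) * gg (k0+m) := by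
    apply mul_pos _ (gg_pos _)
    exact_mod_cast hk0
  linarith

lemma pow_mul_gg {k m : ℕ} (h : k < m) : (2:ℝ)^m * gg k = 2^(m-1-k) := by
  have he : (m-1-k) + (k+1) = m := by omega
  have : (2:ℝ)^(m-1-k) * 2^(k+1) = 2^m := by rw [← pow_add, he]
  rw [gg_eq]
  have h2 : ((1:ℝ)/2)^(k+1) = (2^(k+1))⁻¹ := by rw [one_div, inv_pow]
  rw [h2]
  field_simp
  linarith [this]

lemma pow_mul_partial (t : ℕ → ℕ) (m : ℕ) :
    (2:ℝ)^m * (∑ k ∈ Finset.range m, (t k : ℝ) * gg k)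
      = ((∑ k ∈ Finset.range m, t k * 2^(m-1-k) : ℕ) : ℝ) := by
  rw [Finset.mul_sum]
  push_cast
  apply Finset.sum_congr rfl
  intro k hk
  rw [← pow_mul_gg (Finset.mem_range.1 hk)]
  ring

lemma parity_partial (t : ℕ → ℕ) (j : ℕ) :
    ∃ D, ∑ k ∈ Finset.range (j+1), t k * 2^(j+1-1-k) = 2*D + t j := by
  refine ⟨∑ k ∈ Finset.range j, t k * 2^(j-1-k), ?_⟩
  rw [Finset.sum_range_succ, Finset.mul_sum]
  have h1 : ∀ k ∈ Finset.range j, t k * 2^(j+1-1-k) = 2 * (t k * 2^(j-1-k)) := by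
    intro k hk
    have hk' := Finset.mem_range.1 hk
    have : j+1-1-k = (j-1-k) + 1 := by omega
    rw [this, pow_succ]; ring
  rw [Finset.sum_congr rfl h1]
  simp


private lemma primrec_pow : Primrec₂ (fun a b : ℕ => a ^ b) :=
  Primrec₂.unpaired'.1 Nat.Primrec.pow

private lemma primrec_list_sum : Primrec (List.sum : List ℕ → ℕ) := by
  have h := Primrec.list_foldl (Primrec.id (α := List ℕ)) (Primrec.const (0:ℕ))
    (Primrec.nat_add.comp (Primrec.fst.comp Primrec.snd)
      (Primrec.snd.comp Primrec.snd)).to₂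
  exact h.of_eq fun l => by simp [List.sum_eq_foldl]

private lemma primrec_range_sum {f : ℕ × ℕ → ℕ → ℕ} (hf : Primrec₂ f) :
    Primrec fun p : ℕ × ℕ => ∑ k ∈ Finset.range p.2, f p k := by
  have h1 : Primrec fun p : ℕ × ℕ => ((List.range p.2).map (f p)).sum :=
    primrec_list_sum.comp (Primrec.list_map (Primrec.list_range.comp Primrec.snd) hf)
  exact h1.of_eq fun p => by
    induction p.2 with
    | zero => rfl
    | succ n ih =>
      rw [List.range_succ, List.map_append, List.sum_append, Finset.sum_range_succ, ih]; simp

/-- staged count of codes accepting `j` at stage `s` -/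
def sApp {n : ℕ} (cd : Fin n → Code) (s j : ℕ) : ℕ :=
  ∑ i : Fin n, ((evaln s (cd i) j).isSome).toNat

private lemma primrec_finsum {n : ℕ} (F : Fin n → ℕ × ℕ → ℕ) (hF : ∀ i, Primrec (F i)) :
    Primrec fun p => ∑ i, F i p := by
  induction n with
  | zero => exact (Primrec.const 0).of_eq fun p => by simp
  | succ m ih =>
    have h := (Primrec.nat_add.comp (hF 0) (ih (fun i => F i.succ) (fun i => hF i.succ)))
    exact h.of_eq fun p => (Fin.sum_univ_succ fun i => F i p).symm

lemma primrec_sApp {n : ℕ} (cd : Fin n → Code) :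
    Primrec fun p : ℕ × ℕ => sApp cd p.1 p.2 := by
  apply primrec_finsum
  intro i
  have h1 : Primrec fun p : ℕ × ℕ => (evaln p.1 (cd i) p.2).isSome :=
    Primrec.option_isSome.comp
      (primrec_evaln.comp ((Primrec.fst.pair (Primrec.const (cd i))).pair Primrec.snd))
  exact (Primrec.cond h1 (Primrec.const 1) (Primrec.const 0)).of_eq fun p => by
    cases h : (evaln p.1 (cd i) p.2).isSome <;> simp [h]

/-- staged carry approximation -/
def cApp {n : ℕ} (cd : Fin n → Code) (j s : ℕ) : ℕ :=
  (∑ k ∈ Finset.range s, if j < k then sApp cd s k * 2 ^ (s - 1 - k) else 0) / 2 ^ (s - 1 - j)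

lemma primrec_cApp {n : ℕ} (cd : Fin n → Code) :
    Primrec fun p : ℕ × ℕ => cApp cd p.1 p.2 := by
  have hnum : Primrec fun p : ℕ × ℕ =>
      ∑ k ∈ Finset.range p.2, if p.1 < k then sApp cd p.2 k * 2 ^ (p.2 - 1 - k) else 0 := by
    apply primrec_range_sum
    have hterm : Primrec fun q : (ℕ × ℕ) × ℕ => sApp cd q.1.2 q.2 * 2 ^ (q.1.2 - 1 - q.2) :=
      Primrec.nat_mul.comp
        ((primrec_sApp cd).comp ((Primrec.snd.comp Primrec.fst).pair Primrec.snd))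
        (primrec_pow.comp (Primrec.const 2)
          (Primrec.nat_sub.comp
            (Primrec.nat_sub.comp (Primrec.snd.comp Primrec.fst) (Primrec.const 1))
            Primrec.snd))
    have hc : Primrec fun q : (ℕ × ℕ) × ℕ => decide (q.1.1 < q.2) :=
      (Primrec.nat_lt.comp (Primrec.fst.comp Primrec.fst) Primrec.snd).decide
    exact (Primrec.cond hc hterm (Primrec.const 0)).to₂.of_eq fun p k => by
      by_cases h : p.1 < k <;> simp [h]
  have hden : Primrec fun p : ℕ × ℕ => 2 ^ (p.2 - 1 - p.1) :=
    primrec_pow.comp (Primrec.const 2)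
      (Primrec.nat_sub.comp (Primrec.nat_sub.comp Primrec.snd (Primrec.const 1)) Primrec.fst)
  exact Primrec.nat_div.comp hnum hden

lemma primrec_q {n : ℕ} (cd : Fin n → Code) (N cstar sstar : ℕ) :
    Primrec₂ fun j s : ℕ => decide (N ≤ j ∧ cstar ≤ cApp cd j s ∧ sstar ≤ sApp cd s j) := by
  have h1 : PrimrecPred fun p : ℕ × ℕ => N ≤ p.1 :=
    Primrec.nat_le.comp (Primrec.const N) Primrec.fst
  have h2 : PrimrecPred fun p : ℕ × ℕ => cstar ≤ cApp cd p.1 p.2 :=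
    Primrec.nat_le.comp (Primrec.const cstar) (primrec_cApp cd)
  have h3 : PrimrecPred fun p : ℕ × ℕ => sstar ≤ sApp cd p.2 p.1 :=
    Primrec.nat_le.comp (Primrec.const sstar)
      ((primrec_sApp cd).comp (Primrec.snd.pair Primrec.fst))
  exact (h1.and (h2.and h3)).decide


open Classical in
noncomputable def sig {n : ℕ} (B : Fin n → Set ℕ) (k : ℕ) : ℕ :=
  ∑ i : Fin n, if k ∈ B i then 1 else 0

section Staged
variable {n : ℕ} (cd : Fin n → Code) (B : Fin n → Set ℕ)

lemma sig_le (k : ℕ) : sig B k ≤ n := by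
  classical
  calc sig B k ≤ ∑ _i : Fin n, 1 := Finset.sum_le_sum fun i _ => by
        classical exact by split <;> omega
    _ = n := by simp

variable (hcd : ∀ i j, j ∈ B i ↔ ∃ s, (evaln s (cd i) j).isSome)

include hcd in
lemma sApp_le_sig (s k : ℕ) : sApp cd s k ≤ sig B k := by
  classical
  apply Finset.sum_le_sum
  intro i _
  by_cases h : (evaln s (cd i) k).isSome
  · have : k ∈ B i := (hcd i k).2 ⟨s, h⟩
    simp [h, this]
  · simp [h]

lemma sApp_mono {s s' : ℕ} (h : s ≤ s') (k : ℕ) : sApp cd s k ≤ sApp cd s' k := by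
  apply Finset.sum_le_sum
  intro i _
  by_cases hi : (evaln s (cd i) k).isSome
  · rw [hi, evaln_isSome_mono h hi]
  · simp [hi]

include hcd in
lemma sApp_reach (k : ℕ) : ∃ s0, ∀ s ≥ s0, sApp cd s k = sig B k := by
  classical
  have hper : ∀ i : Fin n, ∃ si, ∀ s ≥ si,
      ((evaln s (cd i) k).isSome).toNat = (if k ∈ B i then 1 else 0) := by
    intro i
    by_cases h : k ∈ B i
    · obtain ⟨si, hsi⟩ := (hcd i k).1 h
      exact ⟨si, fun s hs => by rw [evaln_isSome_mono hs hsi]; simp [h]⟩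
    · refine ⟨0, fun s _ => ?_⟩
      have : ¬ (evaln s (cd i) k).isSome := fun hi => h ((hcd i k).2 ⟨s, hi⟩)
      simp [this, h]
  choose f hf using hper
  refine ⟨Finset.univ.sup f, fun s hs => ?_⟩
  unfold sApp sig
  exact Finset.sum_congr rfl fun i _ =>
    hf i s (le_trans (Finset.le_sup (Finset.mem_univ i)) hs)

include hcd in
lemma sApp_reach_all (m : ℕ) : ∃ s0, ∀ s ≥ s0, ∀ k < m, sApp cd s k = sig B k := by
  choose f hf using fun k => sApp_reach cd B hcd k
  refine ⟨(Finset.range m).sup f, fun s hs k hk => ?_⟩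
  exact hf k s (le_trans (Finset.le_sup (Finset.mem_range.2 hk)) hs)

/-- staged tail approximation, as a real -/
noncomputable def TT (j s : ℕ) : ℝ :=
  ∑ k ∈ Finset.range s, if j < k then (sApp cd s k : ℝ) * gg k else 0

lemma TT_nonneg (j s : ℕ) : 0 ≤ TT cd j s :=
  Finset.sum_nonneg fun k _ => by
    split
    · exact mul_nonneg (Nat.cast_nonneg _) (gg_nonneg _)
    · exact le_refl _

lemma TT_mono (j : ℕ) {s s' : ℕ} (h : s ≤ s') : TT cd j s ≤ TT cd j s' := by
  unfold TT
  calc ∑ k ∈ Finset.range s, (if j < k then (sApp cd s k : ℝ) * gg k else 0)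
      ≤ ∑ k ∈ Finset.range s, (if j < k then (sApp cd s' k : ℝ) * gg k else 0) := by
        apply Finset.sum_le_sum
        intro k _
        split
        · exact mul_le_mul_of_nonneg_right (by exact_mod_cast sApp_mono cd h k) (gg_nonneg _)
        · exact le_refl _
    _ ≤ _ := by
        apply Finset.sum_le_sum_of_subset_of_nonneg
          (Finset.range_subset_range.2 h)
        intro k _ _
        split
        · exact mul_nonneg (Nat.cast_nonneg _) (gg_nonneg _)
        · exact le_refl _

include hcd in
lemma summable_ite_sig (j : ℕ) :
    Summable (fun k => if j < k then (sig B k : ℝ) * gg k else 0) := by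
  apply Summable.of_nonneg_of_le
    (fun k => by split
                 · exact mul_nonneg (Nat.cast_nonneg _) (gg_nonneg _)
                 · exact le_refl _)
    (fun k => by split
                 · exact le_refl _
                 · exact mul_nonneg (Nat.cast_nonneg _) (gg_nonneg _))
    (summable_mul_gg (sig B) n (sig_le B))

include hcd in
lemma tsum_ite_sig (j : ℕ) :
    (∑' k, if j < k then (sig B k : ℝ) * gg k else 0) = tl (sig B) (j+1) := by
  have hs := summable_ite_sig cd B hcd j
  rw [← Summable.sum_add_tsum_nat_add (j+1) hs]
  have h1 : ∑ k ∈ Finset.range (j+1), (if j < k then (sig B k : ℝ) * gg k else 0) = 0 := by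
    apply Finset.sum_eq_zero
    intro k hk
    have := Finset.mem_range.1 hk
    rw [if_neg (by omega)]
  rw [h1, zero_add]
  unfold tl
  apply tsum_congr
  intro k
  rw [if_pos (by omega)]

include hcd in
lemma TT_le_tl (j s : ℕ) : TT cd j s ≤ tl (sig B) (j+1) := by
  rw [← tsum_ite_sig cd B hcd j]
  calc TT cd j s ≤ ∑ k ∈ Finset.range s, (if j < k then (sig B k : ℝ) * gg k else 0) := by
        apply Finset.sum_le_sum
        intro k _
        split
        · exact mul_le_mul_of_nonneg_right
            (by exact_mod_cast sApp_le_sig cd B hcd s k) (gg_nonneg _)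
        · exact le_refl _
    _ ≤ _ := Summable.sum_le_tsum _ (fun k _ => by
        split
        · exact mul_nonneg (Nat.cast_nonneg _) (gg_nonneg _)
        · exact le_refl _) (summable_ite_sig cd B hcd j)

include hcd in
lemma TT_sup (j : ℕ) {r : ℝ} (hr : r < tl (sig B) (j+1)) : ∃ s, r < TT cd j s := by
  have hs := summable_ite_sig cd B hcd j
  have htend := hs.hasSum.tendsto_sum_nat
  rw [← tsum_ite_sig cd B hcd j] at hr
  have hev : ∀ᶠ m in Filter.atTop,
      r < ∑ k ∈ Finset.range m, (if j < k then (sig B k : ℝ) * gg k else 0) :=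
    htend.eventually (eventually_gt_nhds hr)
  obtain ⟨m, hm⟩ := hev.exists
  obtain ⟨s0, hs0⟩ := sApp_reach_all cd B hcd m
  refine ⟨max m s0, lt_of_lt_of_le hm ?_⟩
  calc ∑ k ∈ Finset.range m, (if j < k then (sig B k : ℝ) * gg k else 0)
      = ∑ k ∈ Finset.range m, (if j < k then (sApp cd (max m s0) k : ℝ) * gg k else 0) := by
        apply Finset.sum_congr rfl
        intro k hk
        rw [hs0 (max m s0) (le_max_right _ _) k (Finset.mem_range.1 hk)]
    _ ≤ TT cd j (max m s0) := by
        apply Finset.sum_le_sum_of_subset_of_nonneg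
          (Finset.range_subset_range.2 (le_max_left _ _))
        intro k _ _
        split
        · exact mul_nonneg (Nat.cast_nonneg _) (gg_nonneg _)
        · exact le_refl _

lemma cApp_eq_floor (j s : ℕ) : cApp cd j s = ⌊(2:ℝ)^(j+1) * TT cd j s⌋₊ := by
  have hM : ((∑ k ∈ Finset.range s, if j < k then sApp cd s k * 2 ^ (s - 1 - k) else 0 : ℕ) : ℝ)
      = 2^s * TT cd j s := by
    unfold TT
    rw [Finset.mul_sum]
    push_cast
    apply Finset.sum_congr rfl
    intro k hk
    by_cases h : j < k
    · rw [if_pos h, if_pos h, ← pow_mul_gg (Finset.mem_range.1 hk)]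
      push_cast
      ring
    · simp [h]
  by_cases hjs : j + 1 ≤ s
  · have hexp : (s - 1 - j) + (j+1) = s := by omega
    have h2 : (2:ℝ)^(j+1) * TT cd j s
        = ((∑ k ∈ Finset.range s, if j < k then sApp cd s k * 2 ^ (s - 1 - k) else 0 : ℕ) : ℝ)
          / ((2^(s-1-j) : ℕ) : ℝ) := by
      rw [hM]
      have : (2:ℝ)^s = 2^(s-1-j) * 2^(j+1) := by rw [← pow_add, hexp]
      rw [this]
      push_cast
      field_simp
    rw [cApp, h2, Nat.floor_div_natCast, Nat.floor_natCast]
  · have hT : TT cd j s = 0 := by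
      apply Finset.sum_eq_zero
      intro k hk
      have := Finset.mem_range.1 hk
      rw [if_neg (by omega)]
    have hMz : (∑ k ∈ Finset.range s, if j < k then sApp cd s k * 2 ^ (s - 1 - k) else 0) = 0 := by
      apply Finset.sum_eq_zero
      intro k hk
      have := Finset.mem_range.1 hk
      rw [if_neg (by omega)]
    rw [cApp, hT, hMz, mul_zero, Nat.floor_zero, Nat.zero_div]

end Staged

lemma pigeonhole {J : Set ℕ} (hJ : J.Infinite) (f : ℕ → ℕ) (n : ℕ) (hf : ∀ j, f j ≤ n) :
    ∃ v, {j | j ∈ J ∧ f j = v}.Infinite ∧ {j | j ∈ J ∧ v < f j}.Finite := by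
  classical
  set S := {v | {j | j ∈ J ∧ f j = v}.Infinite} with hS
  have hSsub : S ⊆ Set.Iic n := by
    intro v hv
    by_contra hvn
    simp only [Set.mem_Iic, not_le] at hvn
    have hsub0 : {j | j ∈ J ∧ f j = v} ⊆ (∅ : Set ℕ) := by
      rintro j ⟨-, hj⟩
      exact absurd (hj ▸ hf j) (not_le.2 hvn)
    exact hv (Set.Finite.subset Set.finite_empty hsub0)
  have hSne : S.Nonempty := by
    by_contra hne
    rw [Set.not_nonempty_iff_eq_empty] at hne
    have hsub : J ⊆ ⋃ v ∈ Set.Iic n, {j | j ∈ J ∧ f j = v} := by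
      intro j hj
      exact Set.mem_biUnion (Set.mem_Iic.2 (hf j)) ⟨hj, rfl⟩
    have hfin : (⋃ v ∈ Set.Iic n, {j | j ∈ J ∧ f j = v}).Finite := by
      apply Set.Finite.biUnion (Set.finite_Iic n)
      intro v _
      have : v ∉ S := by rw [hne]; exact Set.notMem_empty v
      exact Set.not_infinite.1 this
    exact hJ (hfin.subset hsub)
  obtain ⟨v, hvS, hvmax⟩ := Set.Finite.exists_maximalFor id S ((Set.finite_Iic n).subset hSsub) hSne
  have hvub : ∀ w ∈ S, w ≤ v := by
    intro w hw
    by_contra hwv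
    push_neg at hwv
    have := hvmax hw hwv.le
    simp only [id] at this
    omega
  refine ⟨v, hvS, ?_⟩
  have hsub : {j | j ∈ J ∧ v < f j} ⊆ ⋃ w ∈ Set.Ioc v n, {j | j ∈ J ∧ f j = w} := by
    rintro j ⟨hjJ, hjv⟩
    exact Set.mem_biUnion (Set.mem_Ioc.2 ⟨hjv, hf j⟩) ⟨hjJ, rfl⟩
  apply Set.Finite.subset _ hsub
  apply Set.Finite.biUnion (Set.finite_Ioc v n)
  intro w hw
  apply Set.not_infinite.1
  intro hinf
  exact absurd (hvub w hinf) (not_le.2 (Set.mem_Ioc.1 hw).1)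


end Aux

section Main
open Nat.Partrec (Code)
open Nat.Partrec.Code
set_option linter.unusedSectionVars false

open Classical in
noncomputable def aDig (A : Set ℕ) (j : ℕ) : ℕ := if j ∈ A then 1 else 0

noncomputable def carry {n : ℕ} (B : Fin n → Set ℕ) (j : ℕ) : ℕ :=
  ⌊(2:ℝ)^(j+1) * tl (sig B) (j+1)⌋₊

lemma tl_le (t : ℕ → ℕ) (n : ℕ) (ht : ∀ k, t k ≤ n) (m : ℕ) :
    tl t m ≤ (n:ℝ) * ((1:ℝ)/2) ^ m := by
  have h1 : tl t m ≤ ∑' k, (n:ℝ) * gg (k+m) := by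
    apply Summable.tsum_le_tsum
      (fun k => mul_le_mul_of_nonneg_right (by exact_mod_cast ht (k+m)) (gg_nonneg _))
      ((summable_mul_gg t n ht).comp_injective (add_left_injective m))
      ((summable_gg.mul_left (n:ℝ)).comp_injective (add_left_injective m))
  rw [tsum_mul_left, tsum_gg_add] at h1
  exact h1

end Main

/-- no regular real is bi-immune. -/
theorem not_biImmune_of_regular (A : Set ℕ) (h : RegularReal (xA A)) :
    ¬ BiImmune A := by
  classical
  rintro ⟨⟨hAinf, hAim⟩, hAcinf, hAcim⟩
  obtain ⟨n, y, hy, hsum⟩ := h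
  choose B hBce hBval using hy
  choose cd hcd using fun i => ce_code_s18 (hBce i)
  have ha_le : ∀ k, aDig A k ≤ 1 := fun k => by unfold aDig; split <;> omega
  have hσ_le : ∀ k, sig B k ≤ n := fun k => sig_le B k
  -- the two binary expansions of x
  have hxa : xA A = ∑' k, (aDig A k : ℝ) * gg k := by
    unfold xA
    apply tsum_congr
    intro k
    rw [Set.indicator_apply]
    unfold aDig
    split <;> simp [gg]
  have hxs : xA A = ∑' k, (sig B k : ℝ) * gg k := by
    rw [← hsum]
    have hterm : ∀ i : Fin n, y i = ∑' k, Set.indicator (B i) (fun j => gg j) k := by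
      intro i
      rw [← hBval i]; rfl
    have hsummable : ∀ i ∈ (Finset.univ : Finset (Fin n)),
        Summable fun k => Set.indicator (B i) (fun j => gg j) k := by
      intro i _
      apply Summable.of_nonneg_of_le _ _ summable_gg
      · intro k; rw [Set.indicator_apply]; split
        · exact gg_nonneg k
        · exact le_refl 0
      · intro k; rw [Set.indicator_apply]; split
        · exact le_refl _
        · exact gg_nonneg k
    calc ∑ i, y i = ∑ i, ∑' k, Set.indicator (B i) (fun j => gg j) k :=
          Finset.sum_congr rfl fun i _ => hterm i
      _ = ∑' k, ∑ i, Set.indicator (B i) (fun j => gg j) k := (Summable.tsum_finsetSum hsummable).symm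
      _ = ∑' k, (sig B k : ℝ) * gg k := by
          apply tsum_congr
          intro k
          unfold sig
          push_cast
          rw [Finset.sum_mul]
          apply Finset.sum_congr rfl
          intro i _
          rw [Set.indicator_apply]
          split <;> simp
  -- the key digit/carry relations
  have hmain : ∀ j : ℕ,
      carry B j + (∑ k ∈ Finset.range (j+1), sig B k * 2^(j+1-1-k))
        = (∑ k ∈ Finset.range (j+1), aDig A k * 2^(j+1-1-k))
      ∧ (carry B j : ℝ) < (2:ℝ)^(j+1) * tl (sig B) (j+1) := by
    intro j
    set m := j + 1 with hm
    set Na : ℕ := ∑ k ∈ Finset.range m, aDig A k * 2^(m-1-k) with hNa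
    set Ns : ℕ := ∑ k ∈ Finset.range m, sig B k * 2^(m-1-k) with hNs
    have hsplit_a : xA A = (∑ k ∈ Finset.range m, (aDig A k:ℝ) * gg k) + tl (aDig A) m :=
      hxa.trans (sum_add_tl (aDig A) 1 ha_le m)
    have hsplit_s : xA A = (∑ k ∈ Finset.range m, (sig B k:ℝ) * gg k) + tl (sig B) m :=
      hxs.trans (sum_add_tl (sig B) n hσ_le m)
    have hEq : (Na:ℝ) + 2^m * tl (aDig A) m = (Ns:ℝ) + 2^m * tl (sig B) m := by
      have h0 := hsplit_a.symm.trans hsplit_s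
      have h1 := congrArg (fun r => (2:ℝ)^m * r) h0
      simp only [mul_add] at h1
      rw [pow_mul_partial (aDig A) m, pow_mul_partial (sig B) m] at h1
      rw [← hNa, ← hNs] at h1
      linarith [h1]
    have hra_pos : 0 < tl (aDig A) m := by
      apply tl_pos (aDig A) 1 ha_le m
      obtain ⟨j', hj'A, hj'⟩ := hAinf.exists_gt m
      refine ⟨j' - m, ?_⟩
      unfold aDig
      rw [Nat.sub_add_cancel hj'.le, if_pos hj'A]
      omega
    have hra_lt : (2:ℝ)^m * tl (aDig A) m < 1 := by
      have h1 : tl (aDig A) m < ((1:ℕ):ℝ) * ((1:ℝ)/2)^m := by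
        apply tl_lt (aDig A) 1 ha_le m
        obtain ⟨j', hj'A, hj'⟩ := hAcinf.exists_gt m
        refine ⟨j' - m, ?_⟩
        unfold aDig
        rw [Nat.sub_add_cancel hj'.le, if_neg hj'A]
        omega
      norm_num at h1
      calc (2:ℝ)^m * tl (aDig A) m < 2^m * ((1:ℝ)/2)^m := by
            apply mul_lt_mul_of_pos_left h1 (by positivity)
        _ = 1 := by rw [← mul_pow]; norm_num
    have hra_nonneg : (0:ℝ) ≤ 2^m * tl (aDig A) m :=
      mul_nonneg (by positivity) (tl_nonneg _ _)
    have hfloor : ⌊(2:ℝ)^m * tl (sig B) m⌋ = (Na:ℤ) - Ns := by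
      rw [Int.floor_eq_iff]
      constructor
      · push_cast; linarith
      · push_cast; linarith
    have hNs_le : Ns ≤ Na := by
      have h0 : (0:ℤ) ≤ ⌊(2:ℝ)^m * tl (sig B) m⌋ :=
        Int.floor_nonneg.2 (mul_nonneg (by positivity) (tl_nonneg _ _))
      rw [hfloor] at h0
      exact_mod_cast sub_nonneg.1 h0
    have hcj : carry B j = Na - Ns := by
      unfold carry
      rw [← hm, ← Int.floor_toNat, hfloor]
      omega
    constructor
    · omega
    · rw [hcj]
      have h2 : ((Na - Ns : ℕ) : ℝ) = (Na:ℝ) - Ns := by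
        push_cast [hNs_le]; ring
      have h3 : 0 < (2:ℝ)^m * tl (aDig A) m := mul_pos (by positivity) hra_pos
      rw [h2]
      linarith
  -- parity characterization of membership in A
  have hkey : ∀ j, (j ∈ A ↔ (sig B j + carry B j) % 2 = 1) := by
    intro j
    have hsum_eq := (hmain j).1
    obtain ⟨D1, hD1⟩ := parity_partial (aDig A) j
    obtain ⟨D2, hD2⟩ := parity_partial (sig B) j
    by_cases hj : j ∈ A
    · have haj : aDig A j = 1 := by unfold aDig; rw [if_pos hj]
      exact iff_of_true hj (by omega)
    · have haj : aDig A j = 0 := by unfold aDig; rw [if_neg hj]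
      exact iff_of_false hj (by omega)
  -- carry is bounded by n
  have hc_le : ∀ j, carry B j ≤ n := by
    intro j
    unfold carry
    have h1 : tl (sig B) (j+1) ≤ (n:ℝ) * ((1:ℝ)/2)^(j+1) := tl_le (sig B) n hσ_le (j+1)
    have h2 : (2:ℝ)^(j+1) * tl (sig B) (j+1) ≤ (n:ℝ) := by
      calc (2:ℝ)^(j+1) * tl (sig B) (j+1) ≤ 2^(j+1) * ((n:ℝ) * (1/2)^(j+1)) :=
            mul_le_mul_of_nonneg_left h1 (by positivity)
        _ = (n:ℝ) * ((2:ℝ) * (1/2))^(j+1) := by rw [mul_pow]; ring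
        _ = (n:ℝ) := by norm_num
    calc ⌊(2:ℝ)^(j+1) * tl (sig B) (j+1)⌋₊ ≤ ⌊(n:ℝ)⌋₊ := Nat.floor_mono h2
      _ = n := Nat.floor_natCast n
  -- staged approximations of the carry
  have hcApp_le : ∀ j s, cApp cd j s ≤ carry B j := by
    intro j s
    rw [cApp_eq_floor]
    exact Nat.floor_mono (mul_le_mul_of_nonneg_left (TT_le_tl cd B hcd j s) (by positivity))
  have hcApp_ex : ∀ j v, v ≤ carry B j → ∃ s, v ≤ cApp cd j s := by
    intro j v hv
    have hvr : (v:ℝ) ≤ (carry B j : ℝ) := by exact_mod_cast hv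
    have hlt : (v:ℝ) < (2:ℝ)^(j+1) * tl (sig B) (j+1) := lt_of_le_of_lt hvr (hmain j).2
    have hdiv : (v:ℝ) / 2^(j+1) < tl (sig B) (j+1) := by
      rw [div_lt_iff₀ (by positivity : (0:ℝ) < 2^(j+1))]
      linarith
    obtain ⟨s, hs⟩ := TT_sup cd B hcd j hdiv
    refine ⟨s, ?_⟩
    rw [cApp_eq_floor]
    apply Nat.le_floor
    rw [div_lt_iff₀ (by positivity : (0:ℝ) < 2^(j+1))] at hs
    linarith
  have hsApp_ex : ∀ k v, v ≤ sig B k → ∃ s, v ≤ sApp cd s k := by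
    intro k v hv
    obtain ⟨s0, hs0⟩ := sApp_reach cd B hcd k
    exact ⟨s0, by rw [hs0 s0 le_rfl]; exact hv⟩
  -- pigeonhole to find the limsup values
  obtain ⟨cstar, hJ1inf, hbad1⟩ :=
    pigeonhole Set.infinite_univ (carry B) n hc_le
  obtain ⟨sstar, hJ2inf, hbad2⟩ := pigeonhole hJ1inf (sig B) n hσ_le
  obtain ⟨N0, hN0⟩ := (hbad1.union hbad2).bddAbove
  set N : ℕ := N0 + 1 with hN
  have hgood : ∀ j, N ≤ j → carry B j ≤ cstar ∧ (carry B j = cstar → sig B j ≤ sstar) := by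
    intro j hj
    constructor
    · by_contra hlt
      push_neg at hlt
      have := hN0 (Set.mem_union_left _ ⟨trivial, hlt⟩)
      omega
    · intro hcj
      by_contra hlt
      push_neg at hlt
      have := hN0 (Set.mem_union_right _ ⟨⟨trivial, hcj⟩, hlt⟩)
      omega
  set W : Set ℕ := {j | N ≤ j ∧ carry B j = cstar ∧ sig B j = sstar} with hW
  have hWmem : ∀ j, j ∈ W ↔ ∃ s,
      (decide (N ≤ j ∧ cstar ≤ cApp cd j s ∧ sstar ≤ sApp cd s j)) = true := by
    intro j
    simp only [decide_eq_true_eq]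
    constructor
    · rintro ⟨hNj, hcj, hsj⟩
      obtain ⟨s1, hs1⟩ := hcApp_ex j cstar (le_of_eq hcj.symm)
      obtain ⟨s2, hs2⟩ := hsApp_ex j sstar (le_of_eq hsj.symm)
      refine ⟨max s1 s2, hNj, ?_, ?_⟩
      · calc cstar ≤ cApp cd j s1 := hs1
          _ ≤ cApp cd j (max s1 s2) := by
              rw [cApp_eq_floor, cApp_eq_floor]
              exact Nat.floor_mono (mul_le_mul_of_nonneg_left
                (TT_mono cd j (le_max_left _ _)) (by positivity))
      · exact le_trans hs2 (sApp_mono cd (le_max_right _ _) j)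
    · rintro ⟨s, hNj, hcs, hss⟩
      have hcj : cstar ≤ carry B j := le_trans hcs (hcApp_le j s)
      have hsj : sstar ≤ sig B j := le_trans hss (sApp_le_sig cd B hcd s j)
      have hceq : carry B j = cstar := le_antisymm (hgood j hNj).1 hcj
      exact ⟨hNj, hceq, le_antisymm ((hgood j hNj).2 hceq) hsj⟩
  have hWce : CE W := ce_of_exists _ (primrec_q cd N cstar sstar) hWmem
  have hWinf : W.Infinite := by
    apply Set.Infinite.mono _ (hJ2inf.diff (Set.finite_lt_nat N))
    rintro j ⟨⟨⟨-, hcj⟩, hsj⟩, hjN⟩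
    simp only [Set.mem_setOf_eq, not_lt] at hjN
    exact ⟨hjN, hcj, hsj⟩
  by_cases hpar : (sstar + cstar) % 2 = 1
  · apply hAim W hWce hWinf
    rintro j ⟨hNj, hcj, hsj⟩
    rw [hkey j, hsj, hcj]
    exact hpar
  · apply hAcim W hWce hWinf
    rintro j ⟨hNj, hcj, hsj⟩
    intro hjA
    rw [hkey j, hsj, hcj] at hjA
    exact hpar hjA

end Paper
end
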